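/- arXiv:1503.03665 — 3 statements merged into one kernel-verified Lean document; each statement's English description precedes it below -/
import Mathlib

section
/- Let γ : S¹ → ℂ be continuous with δ := inf_{ξ∈S¹} |γ(ξ)| > 0 and |γ(ξ)| ≤ 2, satisfying γ(-ξ) = -γ(ξ). Then |γ(ξ)/(2γ(ξ²)²) − γ(-ξ)/(2γ(ξ²)²)| = |γ(ξ)|/|γ(ξ²)|² ≥ δ/4 for all ξ ∈ S¹. Consequently, if α_a/a converges uniformly to γ(ξ)/(2γ(ξ²)²), then there is δ'' > 0 such that for 0 < |a| < δ'', |α_a(ξ)/a − α_a(-ξ)/a| > δ/8 for all ξ ∈ S¹. -/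
/-- If `0 < δ ≤ |γ(ξ)| ≤ 2` on `S¹` and `γ` is odd, then
`|γ(ξ)/(2γ(ξ²)²) − γ(-ξ)/(2γ(ξ²)²)| = |γ(ξ)|/|γ(ξ²)|² ≥ δ/4` on `S¹`; consequently,
if `α_a/a → γ(ξ)/(2γ(ξ²)²)` uniformly as `a → 0`, then there is `δ'' > 0` such that
`|α_a(ξ)/a − α_a(-ξ)/a| > δ/8` for all `0 < |a| < δ''` and all `ξ ∈ S¹`. -/
theorem alpha_antipodal_separation (γ : ℂ → ℂ) (δ : ℝ)
    (hcont : ContinuousOn γ (Metric.sphere (0 : ℂ) 1))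
    (hδ : 0 < δ)
    (hlow : ∀ ξ : ℂ, ‖ξ‖ = 1 → δ ≤ ‖γ ξ‖)
    (hup : ∀ ξ : ℂ, ‖ξ‖ = 1 → ‖γ ξ‖ ≤ 2)
    (hodd : ∀ ξ : ℂ, ‖ξ‖ = 1 → γ (-ξ) = -γ ξ)
    (α : ℂ → ℂ → ℂ)
    (hconv : ∀ ε > (0:ℝ), ∃ ρ > (0:ℝ), ∀ a : ℂ, 0 < ‖a‖ → ‖a‖ < ρ →
      ∀ ξ : ℂ, ‖ξ‖ = 1 → ‖α a ξ / a - γ ξ / (2 * (γ (ξ ^ 2)) ^ 2)‖ < ε) :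
    (∀ ξ : ℂ, ‖ξ‖ = 1 →
      ‖γ ξ / (2 * (γ (ξ ^ 2)) ^ 2) - γ (-ξ) / (2 * (γ (ξ ^ 2)) ^ 2)‖ =
        ‖γ ξ‖ / ‖γ (ξ ^ 2)‖ ^ 2 ∧
      δ / 4 ≤ ‖γ ξ‖ / ‖γ (ξ ^ 2)‖ ^ 2) ∧
    ∃ δ'' > (0:ℝ), ∀ a : ℂ, 0 < ‖a‖ → ‖a‖ < δ'' →
      ∀ ξ : ℂ, ‖ξ‖ = 1 → δ / 8 < ‖α a ξ / a - α a (-ξ) / a‖ := by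
  have key : ∀ ξ : ℂ, ‖ξ‖ = 1 →
      ‖γ ξ / (2 * (γ (ξ ^ 2)) ^ 2) - γ (-ξ) / (2 * (γ (ξ ^ 2)) ^ 2)‖ =
        ‖γ ξ‖ / ‖γ (ξ ^ 2)‖ ^ 2 ∧
      δ / 4 ≤ ‖γ ξ‖ / ‖γ (ξ ^ 2)‖ ^ 2 := by
    intro ξ hξ
    have hξ2 : ‖ξ ^ 2‖ = 1 := by rw [norm_pow, hξ]; norm_num
    have hc : γ (ξ ^ 2) ≠ 0 := by
      intro h
      have := hlow _ hξ2
      rw [h, norm_zero] at this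
      linarith
    have heq : γ ξ / (2 * (γ (ξ ^ 2)) ^ 2) - γ (-ξ) / (2 * (γ (ξ ^ 2)) ^ 2)
        = γ ξ / (γ (ξ ^ 2)) ^ 2 := by
      rw [hodd ξ hξ]
      field_simp
      ring
    constructor
    · rw [heq, norm_div, norm_pow]
    · rw [div_le_div_iff₀ (by norm_num) (pow_pos (lt_of_lt_of_le hδ (hlow _ hξ2)) 2)]
      have h1 := hlow ξ hξ
      have h2 := hup _ hξ2
      have h3 : ‖γ (ξ ^ 2)‖ ^ 2 ≤ 4 := by nlinarith [norm_nonneg (γ (ξ ^ 2))]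
      nlinarith
  refine ⟨key, ?_⟩
  obtain ⟨ρ, hρ, hρ'⟩ := hconv (δ / 32) (by linarith)
  refine ⟨ρ, hρ, fun a ha haρ ξ hξ => ?_⟩
  have hξ' : ‖-ξ‖ = 1 := by rwa [norm_neg]
  have h1 := hρ' a ha haρ ξ hξ
  have h2 := hρ' a ha haρ (-ξ) hξ'
  have hsq : (-ξ) ^ 2 = ξ ^ 2 := by ring
  rw [hsq] at h2
  obtain ⟨keq, klow⟩ := key ξ hξ
  have hBB : δ / 4 ≤ ‖γ ξ / (2 * (γ (ξ ^ 2)) ^ 2) - γ (-ξ) / (2 * (γ (ξ ^ 2)) ^ 2)‖ := by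
    rw [keq]; exact klow
  have htri : ‖γ ξ / (2 * (γ (ξ ^ 2)) ^ 2) - γ (-ξ) / (2 * (γ (ξ ^ 2)) ^ 2)‖ ≤
      ‖α a ξ / a - γ ξ / (2 * (γ (ξ ^ 2)) ^ 2)‖ +
      ‖α a ξ / a - α a (-ξ) / a‖ +
      ‖α a (-ξ) / a - γ (-ξ) / (2 * (γ (ξ ^ 2)) ^ 2)‖ := by
    calc ‖γ ξ / (2 * (γ (ξ ^ 2)) ^ 2) - γ (-ξ) / (2 * (γ (ξ ^ 2)) ^ 2)‖
        = ‖(γ ξ / (2 * (γ (ξ ^ 2)) ^ 2) - α a ξ / a) + (α a ξ / a - α a (-ξ) / a)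
            + (α a (-ξ) / a - γ (-ξ) / (2 * (γ (ξ ^ 2)) ^ 2))‖ := by ring_nf
      _ ≤ _ := by
          refine (norm_add_le _ _).trans ?_
          gcongr
          refine (norm_add_le _ _).trans ?_
          rw [norm_sub_rev]
  linarith
end

section
/- Fix constants δ ∈ (0,2], a with 0 < |a| < (δ²/2)·(δ³/(δ³+64)), and suppose for each k the quantities satisfy: the leading term L_k ≥ (δ/8)/|a|^{k-1} · Π_k^{-1}, each of the 2(k−1) secondary terms is ≤ (2/δ²)^k (δ²/(2|a|))^s Π_k^{-1} for s = 0,…,k−2, and the z-term is ≤ (2/δ²)^k |z| Π_k^{-1}, where Π_k ≤ (2/δ²)^k. Then for all k with (δ²/(2|a|))^{k-1} > (32/δ³)|z|, the combination L_k − (secondary sum) − (z-term) is strictly greater than (δ³/32)(δ²/(2|a|))^{k-1} − |z|. -/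
/-!
Put `r = δ²/(2|a|)` and `n = k - 1`. Factoring out `(2/δ²)^k / Π_k ≥ 1`, the three bounds give
`L_k - S_k - Z_k ≥ (2/δ²)^k / Π_k · (δ³/16 · rⁿ - 2 ∑_{s<n} rˢ - |z|)`.
The smallness of `|a|` says exactly `δ³(r - 1) > 64`, so the geometric sum is below
`rⁿ/(r - 1) < δ³/64 · rⁿ`, and the bracket exceeds `δ³/32 · rⁿ - |z|`, which is positive
by the assumption on `k`.
-/

lemma geom_sum_lt_mul_pow {r c : ℝ} (hr : 1 < r) (hc : 1 ≤ c * (r - 1)) (n : ℕ) :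
    ∑ s ∈ Finset.range n, r ^ s < c * r ^ n := by
  have hr1 : 0 < r - 1 := sub_pos.mpr hr
  calc ∑ s ∈ Finset.range n, r ^ s = (r ^ n - 1) / (r - 1) := geom_sum_eq hr.ne' n
    _ < r ^ n / (r - 1) := by gcongr; linarith
    _ ≤ c * r ^ n := by
      rw [div_le_iff₀ hr1]
      nlinarith [pow_pos (zero_lt_one.trans hr) n]

lemma one_lt_mul_ratio_sub_one {δ A : ℝ} (hδ : 0 < δ) (hA : 0 < A)
    (h : A < δ ^ 2 / 2 * (δ ^ 3 / (δ ^ 3 + 64))) :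
    1 < δ ^ 3 / 64 * (δ ^ 2 / (2 * A) - 1) := by
  have h64 : 0 < δ ^ 3 + 64 := by positivity
  rw [mul_div_assoc', lt_div_iff₀ h64] at h
  rw [div_sub_one (by positivity), ← mul_div_assoc, lt_div_iff₀ (by positivity)]
  nlinarith

lemma leading_coeff_eq {δ A : ℝ} (hδ : 0 < δ) (hA : 0 < A) (n : ℕ) :
    δ / 8 / A ^ n = (2 / δ ^ 2) ^ (n + 1) * (δ ^ 3 / 16 * (δ ^ 2 / (2 * A)) ^ n) := by
  rw [div_pow, div_pow, mul_pow, pow_succ]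
  field_simp
  ring

open Finset in
theorem growth_estimate_general (δ : ℝ) (a z : ℂ) (L S Z Pi : ℕ → ℝ)
    (hδ0 : 0 < δ)
    (ha0 : 0 < ‖a‖) (ha : ‖a‖ < (δ ^ 2 / 2) * (δ ^ 3 / (δ ^ 3 + 64)))
    (hPi : ∀ k : ℕ, 0 < Pi k ∧ Pi k ≤ (2 / δ ^ 2) ^ k)
    (hL : ∀ k : ℕ, (δ / 8) / ‖a‖ ^ (k - 1) * (Pi k)⁻¹ ≤ L k)
    (hS : ∀ k : ℕ, S k ≤
      2 * ∑ s ∈ range (k - 1), (2 / δ ^ 2) ^ k * (δ ^ 2 / (2 * ‖a‖)) ^ s * (Pi k)⁻¹)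
    (hZ : ∀ k : ℕ, Z k ≤ (2 / δ ^ 2) ^ k * ‖z‖ * (Pi k)⁻¹) :
    ∀ k : ℕ, 1 ≤ k → (32 / δ ^ 3) * ‖z‖ < (δ ^ 2 / (2 * ‖a‖)) ^ (k - 1) →
      (δ ^ 3 / 32) * (δ ^ 2 / (2 * ‖a‖)) ^ (k - 1) - ‖z‖ < L k - S k - Z k := by
  intro k hk hkz
  obtain ⟨n, rfl⟩ : ∃ n, k = n + 1 := ⟨k - 1, by omega⟩
  obtain ⟨hPi0, hPile⟩ := hPi (n + 1)
  specialize hL (n + 1)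
  specialize hS (n + 1)
  specialize hZ (n + 1)
  simp only [Nat.add_sub_cancel, ← mul_sum, ← sum_mul] at hkz hL hS ⊢
  set r := δ ^ 2 / (2 * ‖a‖)
  set q := (2 / δ ^ 2) ^ (n + 1) * (Pi (n + 1))⁻¹
  have hc := one_lt_mul_ratio_sub_one hδ0 ha0 ha
  have hgeom := geom_sum_lt_mul_pow (r := r) (by nlinarith [pow_pos hδ0 3]) hc.le n
  have hz : ‖z‖ < δ ^ 3 / 32 * r ^ n :=
    calc ‖z‖ = δ ^ 3 / 32 * (32 / δ ^ 3 * ‖z‖) := by field_simp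
      _ < δ ^ 3 / 32 * r ^ n := by gcongr
  have hq : 1 ≤ q := by
    simpa only [q, ← div_eq_mul_inv] using (one_le_div hPi0).mpr hPile
  have hbound : q * (δ ^ 3 / 16 * r ^ n - 2 * ∑ s ∈ range n, r ^ s - ‖z‖)
      ≤ L (n + 1) - S (n + 1) - Z (n + 1) := by
    rw [leading_coeff_eq hδ0 ha0] at hL
    linarith
  calc δ ^ 3 / 32 * r ^ n - ‖z‖
      < δ ^ 3 / 16 * r ^ n - 2 * ∑ s ∈ range n, r ^ s - ‖z‖ := by linarith
    _ ≤ q * (δ ^ 3 / 16 * r ^ n - 2 * ∑ s ∈ range n, r ^ s - ‖z‖) :=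
      le_mul_of_one_le_left (by linarith) hq
    _ ≤ L (n + 1) - S (n + 1) - Z (n + 1) := hbound

open Finset in
/-- Abstract growth estimate for the deck transformations: combining the lower
bound on the leading term, the bound on the `2(k-1)` secondary terms, the bound on
the `z`-term and the product bound `Π_k ≤ (2/δ²)^k`, one gets
`L_k − S_k − Z_k > (δ³/32)(δ²/(2|a|))^{k-1} − |z|` whenever
`(δ²/(2|a|))^{k-1} > (32/δ³)|z|`. -/
theorem growth_estimate (δ : ℝ) (a z : ℂ) (L S Z Pi : ℕ → ℝ)
    (hδ0 : 0 < δ) (hδ2 : δ ≤ 2)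
    (ha0 : 0 < ‖a‖) (ha : ‖a‖ < (δ ^ 2 / 2) * (δ ^ 3 / (δ ^ 3 + 64)))
    (hPi : ∀ k : ℕ, 0 < Pi k ∧ Pi k ≤ (2 / δ ^ 2) ^ k)
    (hL : ∀ k : ℕ, (δ / 8) / ‖a‖ ^ (k - 1) * (Pi k)⁻¹ ≤ L k)
    (hS : ∀ k : ℕ, S k ≤
      2 * ∑ s ∈ range (k - 1), (2 / δ ^ 2) ^ k * (δ ^ 2 / (2 * ‖a‖)) ^ s * (Pi k)⁻¹)
    (hZ : ∀ k : ℕ, Z k ≤ (2 / δ ^ 2) ^ k * ‖z‖ * (Pi k)⁻¹) :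
    ∀ k : ℕ, 1 ≤ k → (32 / δ ^ 3) * ‖z‖ < (δ ^ 2 / (2 * ‖a‖)) ^ (k - 1) →
      (δ ^ 3 / 32) * (δ ^ 2 / (2 * ‖a‖)) ^ (k - 1) - ‖z‖ < L k - S k - Z k :=
  growth_estimate_general δ a z L S Z Pi hδ0 ha0 ha hPi hL hS hZ
end

section
/- Let z₀ ∈ ℂ, δ ∈ (0,2], and suppose for each k ≥ k₀ and each relevant ξ the bound |p_{j,k}(ξ)z + q_{j,k}(ξ)| > (δ³/32)(δ²/(2|a|))^{k-1} − |z| holds whenever (δ²/(2|a|))^{k-1} > (32/δ³)|z|. Let U₀ = {z : |z − z₀| < δ³/32}. If k₀ is chosen so that (δ²/(2|a|))^{k-1} > (64/δ³)(|z₀| + δ³/32) for all k ≥ k₀, then for all z ∈ U₀ and k ≥ k₀: |p_{j,k}(ξ)z + q_{j,k}(ξ) − z₀| > δ³/32; in particular p_{j,k}(ξ)z + q_{j,k}(ξ) ∉ U₀. -/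
/-- Neighborhood-escape estimate: if `|p_{j,k}(ξ)z + q_{j,k}(ξ)| >
(δ³/32)(δ²/(2|a|))^{k-1} − |z|` whenever `(δ²/(2|a|))^{k-1} > (32/δ³)|z|`, and `k₀`
is chosen so that `(δ²/(2|a|))^{k-1} > (64/δ³)(|z₀| + δ³/32)` for `k ≥ k₀`, then
every `z` in the ball `U₀ = {z : |z − z₀| < δ³/32}` is sent by `z ↦ p_{j,k}(ξ)z +
q_{j,k}(ξ)` (for `k ≥ k₀`) at distance greater than `δ³/32` from `z₀`; in
particular the image leaves `U₀`. -/
theorem neighborhood_escape (δ : ℝ) (a z₀ : ℂ) (p q : ℕ → ℂ → ℂ) (k₀ : ℕ)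
    (hδ0 : 0 < δ) (hδ2 : δ ≤ 2) (ha0 : 0 < ‖a‖)
    (hgrow : ∀ k : ℕ, k₀ ≤ k → ∀ ξ : ℂ, ‖ξ‖ = 1 → ∀ z : ℂ,
      (32 / δ ^ 3) * ‖z‖ < (δ ^ 2 / (2 * ‖a‖)) ^ (k - 1) →
      (δ ^ 3 / 32) * (δ ^ 2 / (2 * ‖a‖)) ^ (k - 1) - ‖z‖ < ‖p k ξ * z + q k ξ‖)
    (hk₀ : ∀ k : ℕ, k₀ ≤ k →
      (64 / δ ^ 3) * (‖z₀‖ + δ ^ 3 / 32) < (δ ^ 2 / (2 * ‖a‖)) ^ (k - 1)) :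
    ∀ z : ℂ, ‖z - z₀‖ < δ ^ 3 / 32 → ∀ k : ℕ, k₀ ≤ k → ∀ ξ : ℂ, ‖ξ‖ = 1 →
      δ ^ 3 / 32 < ‖p k ξ * z + q k ξ - z₀‖ ∧
      p k ξ * z + q k ξ ∉ Metric.ball z₀ (δ ^ 3 / 32) := by
  intro z hz k hk ξ hξ
  have hδ3 : 0 < δ ^ 3 := by positivity
  set R := (δ ^ 2 / (2 * ‖a‖)) ^ (k - 1) with hR
  have hzM : ‖z‖ ≤ ‖z₀‖ + δ ^ 3 / 32 := by
    calc ‖z‖ = ‖z - z₀ + z₀‖ := by ring_nf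
    _ ≤ ‖z - z₀‖ + ‖z₀‖ := norm_add_le _ _
    _ ≤ ‖z₀‖ + δ ^ 3 / 32 := by linarith [le_of_lt hz]
  have hM0 : 0 < ‖z₀‖ + δ ^ 3 / 32 := by positivity
  have hRk := hk₀ k hk
  have hsmall : (32 / δ ^ 3) * ‖z‖ < R := by
    have : (32 / δ ^ 3) * ‖z‖ ≤ (32 / δ ^ 3) * (‖z₀‖ + δ ^ 3 / 32) := by
      apply mul_le_mul_of_nonneg_left hzM (by positivity)
    have h64 : (64 / δ ^ 3) * (‖z₀‖ + δ ^ 3 / 32)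
        = 2 * ((32 / δ ^ 3) * (‖z₀‖ + δ ^ 3 / 32)) := by ring
    have hpos : 0 < (32 / δ ^ 3) * (‖z₀‖ + δ ^ 3 / 32) := by positivity
    linarith [hRk]
  have hg := hgrow k hk ξ hξ z hsmall
  have key : δ ^ 3 / 32 < ‖p k ξ * z + q k ξ‖ - ‖z₀‖ := by
    have h1 : (δ ^ 3 / 32) * R > (δ ^ 3 / 32) * ((64 / δ ^ 3) * (‖z₀‖ + δ ^ 3 / 32)) :=
      mul_lt_mul_of_pos_left hRk (by positivity)
    have h2 : (δ ^ 3 / 32) * ((64 / δ ^ 3) * (‖z₀‖ + δ ^ 3 / 32))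
        = 2 * (‖z₀‖ + δ ^ 3 / 32) := by field_simp; ring
    nlinarith [hg, hzM]
  have h3 : ‖p k ξ * z + q k ξ‖ - ‖z₀‖ ≤ ‖p k ξ * z + q k ξ - z₀‖ :=
    norm_sub_norm_le _ _
  refine ⟨lt_of_lt_of_le key h3, ?_⟩
  simp only [Metric.mem_ball, dist_eq_norm, not_lt]
  exact le_of_lt (lt_of_lt_of_le key h3)
end
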